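/- The group of isomorphisms preserving a mode W that partitions the agents, with spectrum {k_i • m_i}_{1≤i≤l} (k_i modalities of cardinality m_i, with pairwise distinct m_i), is isomorphic to the direct product over i of the wreath products Sym(B^{m_i}) ≀ S_{k_i}; in particular its order is ∏_{i=1}^{l} (2^{m_i}!)^{k_i} · k_i!. -/

import Mathlib

/-!
Since `W` partitions the agents, a vertex of `KM W` is a family of Boolean words, one on each
modality, and two vertices are adjacent iff they differ on exactly one modality: `KM W` is the
Hamming graph with one coordinate per modality. Numbering the modalities of cardinality `m i` by
`Fin (k i)`, the coordinates become pairs `(i, j)` with alphabet `B ^ m i`.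

An automorphism of a Hamming graph sends all edges of a given direction to edges of one common
direction: at a vertex, two edges point the same way iff their other ends are equal or adjacent,
and across an edge, opposite sides of a square go to opposite sides of a square. So it permutes
the coordinates and maps each alphabet bijectively onto the alphabet of the image coordinate. The
alphabet sizes `2 ^ m i` being distinct, the coordinate permutation preserves each class `i`, so
the automorphism is the action of an element of `∏ i, Sym(B ^ m i) ≀ S_(k i)`. This action is
faithful, since a class with `m i = 0` consists of at most one (empty) modality.
-/

/-- The automorphism group of a simple graph, as a subgroup of the permutations
of its vertices. -/
def graphAut {V : Type*} (G : SimpleGraph V) : Subgroup (Equiv.Perm V) where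
  carrier := {π | ∀ a b, G.Adj (π a) (π b) ↔ G.Adj a b}
  one_mem' := by intro a b; simp
  mul_mem' := by
    intro π σ hπ hσ a b
    exact (hπ (σ a) (σ b)).trans (hσ a b)
  inv_mem' := by
    intro π hπ a b
    simpa using (hπ (π⁻¹ a) (π⁻¹ b)).symm

/-- The complete modal graph of a mode `W`. -/
def KM {n : ℕ} (W : Finset (Finset (Fin n))) : SimpleGraph (Fin n → Bool) where
  Adj b1 b2 := ∃ w ∈ W, (∃ i ∈ w, b1 i ≠ b2 i) ∧ ∀ i ∉ w, b1 i = b2 i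
  symm := by
    constructor
    rintro b1 b2 ⟨w, hw, ⟨i, hi, hne⟩, hout⟩
    exact ⟨w, hw, ⟨i, hi, hne.symm⟩, fun j hj => (hout j hj).symm⟩
  loopless := by constructor; rintro b ⟨w, _, ⟨i, _, hne⟩, _⟩; exact hne rfl

/-- The action of `S_k` on `k`-tuples of elements of a group `G`, by permuting
the coordinates. -/
def permMulAut (G : Type*) [Group G] (k : ℕ) :
    Equiv.Perm (Fin k) →* MulAut (Fin k → G) where
  toFun π := { Equiv.arrowCongr π (Equiv.refl G) with map_mul' := fun _ _ => rfl }
  map_one' := by ext f i; rfl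
  map_mul' := by intro π σ; ext f i; rfl

/-- The wreath product `G ≀ S_k`. -/
def Wreath (G : Type*) [Group G] (k : ℕ) :=
  (Fin k → G) ⋊[permMulAut G k] Equiv.Perm (Fin k)

noncomputable instance (G : Type*) [Group G] (k : ℕ) : Group (Wreath G k) :=
  inferInstanceAs (Group ((Fin k → G) ⋊[permMulAut G k] Equiv.Perm (Fin k)))

theorem eq_of_update_invariant {C : Type*} [DecidableEq C] [Finite C] {A : C → Type*}
    {β : Sort*} {f : (∀ c, A c) → β} {S : Set C}
    (hf : ∀ v, ∀ d ∈ S, ∀ t, f (Function.update v d t) = f v)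
    {v w : ∀ c, A c} (hvw : ∀ d ∉ S, v d = w d) : f v = f w := by
  have := Fintype.ofFinite C
  classical
  suffices key : ∀ s : Finset C, ↑s ⊆ S → ∀ v, (∀ d ∉ s, v d = w d) → f v = f w from
    key {d | v d ≠ w d} (fun d hd => by_contra fun hdS => by simp [hvw d hdS] at hd) v
      (fun d hd => by simpa using hd)
  intro s
  induction s using Finset.induction_on with
  | empty => exact fun _ v hv => congrArg f (funext fun d => hv d (Finset.notMem_empty d))
  | insert d s _ ih =>
    intro hS v hv
    rw [← hf v d (hS (Finset.mem_insert_self d s)) (w d)]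
    refine ih (subset_trans (by simp) hS) _ fun e he => ?_
    rcases eq_or_ne e d with rfl | hed
    · simp
    · rw [Function.update_of_ne hed]
      exact hv e (by simp [hed, he])

section HammingGraph

variable {C : Type*} {A : C → Type*}

def DiffersOnlyAt (c : C) (u v : ∀ c, A c) : Prop :=
  u c ≠ v c ∧ ∀ d ≠ c, u d = v d

theorem DiffersOnlyAt.symm {c : C} {u v : ∀ c, A c} (h : DiffersOnlyAt c u v) :
    DiffersOnlyAt c v u :=
  ⟨h.1.symm, fun d hd => (h.2 d hd).symm⟩

def hammingGraph (A : C → Type*) : SimpleGraph (∀ c, A c) where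
  Adj u v := ∃ c, DiffersOnlyAt c u v
  symm := ⟨fun _ _ ⟨c, h⟩ => ⟨c, h.symm⟩⟩
  loopless := ⟨fun _ ⟨_, h⟩ => h.1 rfl⟩

@[simp]
theorem hammingGraph_adj {u v : ∀ c, A c} :
    (hammingGraph A).Adj u v ↔ ∃ c, DiffersOnlyAt c u v :=
  Iff.rfl

namespace DiffersOnlyAt

variable {a b c d : C} {u v w z : ∀ c, A c}

theorem adj (h : DiffersOnlyAt c u v) : (hammingGraph A).Adj u v := hammingGraph_adj.mpr ⟨c, h⟩

theorem unique (h : DiffersOnlyAt c u v) (h' : DiffersOnlyAt d u v) : c = d :=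
  by_contra fun hcd => h.1 (h'.2 c hcd)

/-- Two edges at a common vertex point in the same direction exactly when their other ends are
equal or adjacent; this is what makes directions visible to graph automorphisms. -/
theorem eq_iff_eq_or_adj (hv : DiffersOnlyAt c u v) (hw : DiffersOnlyAt d u w) :
    c = d ↔ v = w ∨ (hammingGraph A).Adj v w := by
  constructor
  · rintro rfl
    by_cases hc : v c = w c
    · refine .inl (funext fun e => ?_)
      rcases eq_or_ne e c with rfl | hec
      · exact hc
      · rw [← hv.2 e hec, hw.2 e hec]
    · exact .inr (adj ⟨hc, fun e hec => by rw [← hv.2 e hec, hw.2 e hec]⟩)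
  · intro hvw
    by_contra hcd
    have hc : v c ≠ w c := by rw [← hw.2 c hcd]; exact hv.1.symm
    have hd : v d ≠ w d := by rw [← hv.2 d (Ne.symm hcd)]; exact hw.1
    rcases hvw with rfl | hvw
    · exact hc rfl
    obtain ⟨e, he⟩ := hammingGraph_adj.mp hvw
    rcases eq_or_ne c e with rfl | hce
    · exact hd (he.2 d (Ne.symm hcd))
    · exact hc (he.2 c hce)

theorem parallel_of_square (hv : DiffersOnlyAt a w v) (hu : DiffersOnlyAt b w u) (hab : a ≠ b)
    (hvz : (hammingGraph A).Adj v z) (huz : (hammingGraph A).Adj u z) (hzw : z ≠ w) :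
    DiffersOnlyAt a u z := by
  obtain ⟨a', hza⟩ := hammingGraph_adj.mp hvz
  obtain ⟨b', hzb⟩ := hammingGraph_adj.mp huz
  have hvu : ∀ e, e ≠ a' → e ≠ b' → v e = u e := fun e h1 h2 =>
    (hza.2 e h1).trans (hzb.2 e h2).symm
  have ha : v a ≠ u a := by rw [← hu.2 a hab]; exact hv.1.symm
  have hb : v b ≠ u b := by rw [← hv.2 b (Ne.symm hab)]; exact hu.1
  have ha' : a = a' ∨ a = b' := by by_contra! h; exact ha (hvu a h.1 h.2)
  have hb' : b = a' ∨ b = b' := by by_contra! h; exact hb (hvu b h.1 h.2)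
  rcases ha' with rfl | rfl
  · rcases hb' with rfl | rfl
    · exact absurd rfl hab
    · refine absurd (funext fun e => ?_) hzw
      rcases eq_or_ne e a with rfl | hea
      · rw [← hzb.2 e hab, hu.2 e hab]
      · rw [← hza.2 e hea, hv.2 e hea]
  · exact hzb

end DiffersOnlyAt

namespace hammingGraph

theorem differsOnlyAt_update [DecidableEq C] {c : C} {u : ∀ c, A c} {x : A c}
    (hx : u c ≠ x) : DiffersOnlyAt c u (Function.update u c x) :=
  ⟨by simpa using hx, fun d hd => (Function.update_of_ne hd x u).symm⟩

theorem exists_differsOnlyAt_iff (c : C) (u : ∀ c, A c) :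
    (∃ v, DiffersOnlyAt c u v) ↔ Nontrivial (A c) := by
  classical
  refine ⟨fun ⟨v, hv⟩ => ⟨u c, v c, hv.1⟩, fun _ => ?_⟩
  obtain ⟨x, hx⟩ := exists_ne (u c)
  exact ⟨_, differsOnlyAt_update hx.symm⟩

variable (π : hammingGraph A ≃g hammingGraph A)

theorem map_dir_eq_iff {c d c' d' : C} {u v w : ∀ c, A c}
    (hv : DiffersOnlyAt c u v) (hw : DiffersOnlyAt d u w)
    (hv' : DiffersOnlyAt c' (π u) (π v)) (hw' : DiffersOnlyAt d' (π u) (π w)) :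
    c' = d' ↔ c = d := by
  rw [hv'.eq_iff_eq_or_adj hw', hv.eq_iff_eq_or_adj hw, π.injective.eq_iff, π.map_adj_iff]

open Classical in
/-- The direction of the image under `π` of any edge at `u` in direction `c` (see
`map_dir_eq_iff`); it is `c` itself when there is no such edge. -/
noncomputable def localDir (c : C) (u : ∀ c, A c) : C :=
  if h : ∃ v, DiffersOnlyAt c u v then
    Classical.choose (hammingGraph_adj.mp (π.map_adj_iff.mpr h.choose_spec.adj))
  else c

theorem differsOnlyAt_localDir {c : C} {u v : ∀ c, A c} (h : DiffersOnlyAt c u v) :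
    DiffersOnlyAt (localDir π c u) (π u) (π v) := by
  have hex : ∃ v, DiffersOnlyAt c u v := ⟨v, h⟩
  obtain ⟨c', hc'⟩ := hammingGraph_adj.mp (π.map_adj_iff.mpr h.adj)
  have hchoice :=
    Classical.choose_spec (hammingGraph_adj.mp (π.map_adj_iff.mpr hex.choose_spec.adj))
  rw [localDir, dif_pos hex]
  rwa [(map_dir_eq_iff π hex.choose_spec h hchoice hc').mpr rfl]

theorem localDir_of_not_nontrivial {c : C} (hc : ¬ Nontrivial (A c)) (u : ∀ c, A c) :
    localDir π c u = c := by
  rw [localDir, dif_neg ((exists_differsOnlyAt_iff c u).not.mpr hc)]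

variable [DecidableEq C]

/-- Moving the base point along an edge does not change the image direction: along an edge of
the same direction this is uniqueness of directions, and along an edge of another direction the
two edges span a square, whose image is again a square with parallel opposite sides. -/
theorem localDir_update (c : C) (u : ∀ c, A c) (d : C) (t : A d) :
    localDir π c (Function.update u d t) = localDir π c u := by
  by_cases ht : u d = t
  · rw [← ht, Function.update_eq_self]
  by_cases hc : Nontrivial (A c)
  swap
  · rw [localDir_of_not_nontrivial π hc, localDir_of_not_nontrivial π hc]
  set u' := Function.update u d t
  have hd : DiffersOnlyAt d u u' := differsOnlyAt_update ht
  rcases eq_or_ne d c with rfl | hdc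
  · exact (differsOnlyAt_localDir π hd.symm).symm.unique (differsOnlyAt_localDir π hd)
  obtain ⟨v, hv⟩ := (exists_differsOnlyAt_iff c u).mpr hc
  set w := Function.update v d t
  have hu'w : DiffersOnlyAt c u' w := by
    refine ⟨?_, fun e hec => ?_⟩
    · simpa [u', w, Function.update_of_ne hdc.symm] using hv.1
    · rcases eq_or_ne e d with rfl | hed
      · simp [u', w]
      · simpa [u', w, Function.update_of_ne hed] using hv.2 e hec
  have hvw : DiffersOnlyAt d v w := differsOnlyAt_update (by rwa [← hv.2 d hdc])
  have hdir : localDir π c u ≠ localDir π d u := fun h => hdc <| Eq.symm <|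
    (map_dir_eq_iff π hv hd (differsOnlyAt_localDir π hv) (differsOnlyAt_localDir π hd)).mp h
  have hwu : π w ≠ π u := fun h => hu'w.1 (by rw [π.injective h, ← hd.2 c hdc.symm])
  exact (differsOnlyAt_localDir π hu'w).unique <|
    (differsOnlyAt_localDir π hv).parallel_of_square (differsOnlyAt_localDir π hd) hdir
      (π.map_adj_iff.mpr hvw.adj) (π.map_adj_iff.mpr hu'w.adj) hwu

theorem localDir_eq [Finite C] (c : C) (u v : ∀ c, A c) : localDir π c u = localDir π c v :=
  eq_of_update_invariant (S := Set.univ) (fun u d _ t => localDir_update π c u d t)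
    (fun d hd => absurd (Set.mem_univ d) hd)

variable [∀ c, Nonempty (A c)]

noncomputable def dirMap (c : C) : C :=
  localDir π c (Classical.arbitrary _)

theorem _root_.DiffersOnlyAt.map [Finite C] {c : C} {u v : ∀ c, A c}
    (h : DiffersOnlyAt c u v) : DiffersOnlyAt (dirMap π c) (π u) (π v) := by
  rw [dirMap, localDir_eq π c _ u]
  exact differsOnlyAt_localDir π h

theorem dirMap_symm_dirMap [Finite C] (c : C) : dirMap π.symm (dirMap π c) = c := by
  by_cases hc : Nontrivial (A c)
  · obtain ⟨v, hv⟩ := (exists_differsOnlyAt_iff c (Classical.arbitrary _)).mpr hc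
    have hv' := (hv.map π).map π.symm
    simp only [RelIso.symm_apply_apply] at hv'
    exact hv'.unique hv
  · rw [dirMap, dirMap, localDir_of_not_nontrivial π hc, localDir_of_not_nontrivial π.symm hc]

noncomputable def dirPerm [Finite C] : Equiv.Perm C where
  toFun := dirMap π
  invFun := dirMap π.symm
  left_inv := dirMap_symm_dirMap π
  right_inv := dirMap_symm_dirMap π.symm

theorem apply_dirMap_congr [Finite C] {c : C} {v w : ∀ c, A c} (h : v c = w c) :
    π v (dirMap π c) = π w (dirMap π c) := by
  refine eq_of_update_invariant (f := fun x => π x (dirMap π c)) (S := {d | d ≠ c})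
    (fun x d hdc t => ?_) fun d hd => ?_
  · by_cases ht : x d = t
    · rw [← ht, Function.update_eq_self]
    · exact (((differsOnlyAt_update ht).map π).2 _
        ((dirPerm π).injective.ne hdc).symm).symm
  · rwa [not_not.mp hd]

noncomputable def coordMap (c : C) (x : A c) : A (dirMap π c) :=
  π (Function.update (Classical.arbitrary _) c x) (dirMap π c)

theorem apply_dirMap [Finite C] (v : ∀ c, A c) (c : C) :
    π v (dirMap π c) = coordMap π c (v c) :=
  apply_dirMap_congr π (by simp)

theorem coordMap_bijective [Finite C] (c : C) : Function.Bijective (coordMap π c) := by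
  refine ⟨fun x y hxy => ?_, fun y => ?_⟩
  · set u : ∀ c, A c := Classical.arbitrary _
    have himage : π (Function.update u c x) = π (Function.update u c y) := by
      refine funext fun e' => ?_
      obtain ⟨e, rfl⟩ := (dirPerm π).surjective e'
      change π _ (dirMap π e) = π _ (dirMap π e)
      rw [apply_dirMap, apply_dirMap]
      rcases eq_or_ne e c with rfl | hec
      · simpa using hxy
      · simp [Function.update_of_ne hec]
    simpa using congrFun (π.injective himage) c
  · refine ⟨π.symm (Function.update (Classical.arbitrary _) (dirMap π c) y) c, ?_⟩
    rw [← apply_dirMap]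
    simp

theorem exists_perm_apply_eq [Finite C] :
    ∃ (σ : Equiv.Perm C) (F : ∀ c, A c ≃ A (σ c)), ∀ v c, π v (σ c) = F c (v c) :=
  ⟨dirPerm π, fun c => Equiv.ofBijective _ (coordMap_bijective π c), apply_dirMap π⟩

end hammingGraph

def hammingGraph.isoOfEquiv {C' : Type*} {B : C' → Type*} (e : C ≃ C')
    (f : ∀ c, A c ≃ B (e c)) : hammingGraph A ≃g hammingGraph B where
  toEquiv := e.piCongr f
  map_rel_iff' {u v} := by
    simp only [hammingGraph_adj, DiffersOnlyAt, e.symm.exists_congr_left, e.symm.forall_congr_left]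
    simp [Equiv.piCongr_apply_apply, e.injective.ne_iff]

end HammingGraph

theorem mem_graphAut {V : Type*} {G : SimpleGraph V} {p : Equiv.Perm V} :
    p ∈ graphAut G ↔ ∀ a b, G.Adj (p a) (p b) ↔ G.Adj a b :=
  Iff.rfl

def graphAutCongr {V V' : Type*} {G : SimpleGraph V} {G' : SimpleGraph V'} (e : G ≃g G') :
    graphAut G ≃* graphAut G' :=
  (e.toEquiv.permCongrHom.subgroupMap (graphAut G)).trans (MulEquiv.subgroupCongr (by
    ext q
    simp only [Subgroup.map_equiv_eq_comap_symm, Subgroup.mem_comap, mem_graphAut]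
    change (∀ a b, G.Adj (e.symm (q (e a))) (e.symm (q (e b))) ↔ G.Adj a b) ↔ _
    simp only [e.symm.map_adj_iff, ← e.map_adj_iff (G := G)]
    exact (e.surjective.forall₂ (p := fun x y => G'.Adj (q x) (q y) ↔ G'.Adj x y)).symm))

theorem Equiv.Perm.exists_apply_sigma_mk_eq {ι : Type*} {β : ι → Type*} [∀ i, Finite (β i)]
    (σ : Equiv.Perm (Σ i, β i)) (hσ : ∀ c, (σ c).1 = c.1) :
    ∃ r : ∀ i, Equiv.Perm (β i), ∀ i j, σ ⟨i, j⟩ = ⟨i, r i j⟩ := by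
  have hfiber : ∀ i j, ∃ j', σ ⟨i, j⟩ = ⟨i, j'⟩ := by
    intro i j
    generalize hc : σ ⟨i, j⟩ = c
    obtain ⟨i', j'⟩ := c
    obtain rfl : i' = i := by simpa [hc] using hσ ⟨i, j⟩
    exact ⟨j', rfl⟩
  choose ρ hρ using hfiber
  have hinj : ∀ i, Function.Injective (ρ i) := fun i j j' h =>
    sigma_mk_injective (σ.injective (by rw [hρ, hρ, h]))
  exact ⟨fun i => Equiv.ofBijective (ρ i) (Finite.injective_iff_bijective.mp (hinj i)), hρ⟩

section WreathAction

variable {ι : Type*} (k : ι → ℕ) (X : ι → Type*)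

def wreathAct (g : ∀ i, Wreath (Equiv.Perm (X i)) (k i)) (v : ∀ c : Σ i, Fin (k i), X c.1) :
    ∀ c : Σ i, Fin (k i), X c.1 :=
  fun c => (g c.1).left c.2 (v ⟨c.1, (g c.1).right⁻¹ c.2⟩)

theorem wreathAct_one (v : ∀ c : Σ i, Fin (k i), X c.1) : wreathAct k X 1 v = v :=
  rfl

theorem wreathAct_mul (g h : ∀ i, Wreath (Equiv.Perm (X i)) (k i))
    (v : ∀ c : Σ i, Fin (k i), X c.1) :
    wreathAct k X (g * h) v = wreathAct k X g (wreathAct k X h v) :=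
  rfl

noncomputable def wreathPerm :
    (∀ i, Wreath (Equiv.Perm (X i)) (k i)) →* Equiv.Perm (∀ c : Σ i, Fin (k i), X c.1) where
  toFun g :=
    { toFun := wreathAct k X g
      invFun := wreathAct k X g⁻¹
      left_inv v := by rw [← wreathAct_mul, inv_mul_cancel, wreathAct_one]
      right_inv v := by rw [← wreathAct_mul, mul_inv_cancel, wreathAct_one] }
  map_one' := Equiv.ext (wreathAct_one k X)
  map_mul' g h := Equiv.ext (wreathAct_mul k X g h)

variable {k X}

theorem wreathPerm_apply (g : ∀ i, Wreath (Equiv.Perm (X i)) (k i))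
    (v : ∀ c : Σ i, Fin (k i), X c.1) (i : ι) (j : Fin (k i)) :
    wreathPerm k X g v ⟨i, j⟩ = (g i).left j (v ⟨i, (g i).right⁻¹ j⟩) :=
  rfl

theorem DiffersOnlyAt.wreathPerm {i : ι} {j : Fin (k i)} {u v : ∀ c : Σ i, Fin (k i), X c.1}
    (h : DiffersOnlyAt ⟨i, j⟩ u v) (g : ∀ i, Wreath (Equiv.Perm (X i)) (k i)) :
    DiffersOnlyAt ⟨i, (g i).right j⟩ (wreathPerm k X g u) (wreathPerm k X g v) := by
  refine ⟨?_, fun ⟨i', j'⟩ hne => ?_⟩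
  · rw [wreathPerm_apply, wreathPerm_apply, Equiv.Perm.inv_def, Equiv.symm_apply_apply]
    exact ((g i).left _).injective.ne h.1
  · rw [wreathPerm_apply, wreathPerm_apply, h.2]
    rintro ⟨⟩
    simp at hne

variable (k X)

theorem wreathPerm_mem_graphAut (g : ∀ i, Wreath (Equiv.Perm (X i)) (k i)) :
    wreathPerm k X g ∈ graphAut (hammingGraph fun c : Σ i, Fin (k i) => X c.1) := by
  have hadj : ∀ g u v, (hammingGraph _).Adj u v →
      (hammingGraph _).Adj (wreathPerm k X g u) (wreathPerm k X g v) := by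
    rintro g u v ⟨⟨i, j⟩, h⟩
    exact (h.wreathPerm g).adj
  refine fun u v => ⟨fun huv => ?_, hadj g u v⟩
  simpa using hadj g⁻¹ _ _ huv

theorem wreathPerm_injective [∀ i, Nonempty (X i)] (hX : ∀ i, Nontrivial (X i) ∨ k i ≤ 1) :
    Function.Injective (wreathPerm k X) := by
  classical
  refine (injective_iff_map_eq_one _).mpr fun g hg => funext fun i => ?_
  have hfix : ∀ (v : ∀ c : Σ i, Fin (k i), X c.1) j,
      (g i).left j (v ⟨i, (g i).right⁻¹ j⟩) = v ⟨i, j⟩ := fun v j =>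
    congrFun (DFunLike.congr_fun hg v) ⟨i, j⟩
  set u : ∀ c : Σ i, Fin (k i), X c.1 := Classical.arbitrary _
  have hright : (g i).right⁻¹ = 1 := by
    rcases hX i with hXi | hki
    · refine Equiv.ext fun j => by_contra fun hj => ?_
      obtain ⟨x, y, hxy⟩ := exists_pair_ne (X i)
      have hne : (⟨i, j⟩ : Σ i, Fin (k i)) ≠ ⟨i, (g i).right⁻¹ j⟩ := fun h =>
        hj (sigma_mk_injective h).symm
      have hx := hfix (Function.update u ⟨i, (g i).right⁻¹ j⟩ x) j
      have hy := hfix (Function.update u ⟨i, (g i).right⁻¹ j⟩ y) j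
      simp only [Function.update_self, Function.update_of_ne hne] at hx hy
      exact hxy (((g i).left j).injective (hx.trans hy.symm))
    · have : Subsingleton (Fin (k i)) := Fin.subsingleton_iff_le_one.mpr hki
      exact Subsingleton.elim _ _
  refine SemidirectProduct.ext (funext fun j => Equiv.ext fun x => ?_) (inv_eq_one.mp hright)
  have hx := hfix (Function.update u ⟨i, j⟩ x) j
  rw [hright] at hx
  simp only [Equiv.Perm.one_apply, Function.update_self] at hx
  exact hx

theorem exists_wreathPerm_eq [Finite ι] [∀ i, Nonempty (X i)]
    (hX : Function.Injective fun i => Nat.card (X i))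
    (p : Equiv.Perm (∀ c : Σ i, Fin (k i), X c.1))
    (hp : p ∈ graphAut (hammingGraph fun c : Σ i, Fin (k i) => X c.1)) :
    ∃ g, wreathPerm k X g = p := by
  classical
  obtain ⟨σ, F, hF⟩ := hammingGraph.exists_perm_apply_eq
    (⟨p, fun {u v} => hp u v⟩ : hammingGraph _ ≃g hammingGraph _)
  obtain ⟨r, hr⟩ := σ.exists_apply_sigma_mk_eq fun c => hX (Nat.card_congr (F c)).symm
  have hcoord : ∀ i j, ∃ f : Equiv.Perm (X i), ∀ v, p v ⟨i, r i j⟩ = f (v ⟨i, j⟩) := by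
    intro i j
    have key : ∀ c, σ ⟨i, j⟩ = c → ∃ f : X i ≃ X c.1, ∀ v, p v c = f (v ⟨i, j⟩) := by
      rintro c rfl
      exact ⟨F ⟨i, j⟩, fun v => hF v ⟨i, j⟩⟩
    exact key _ (hr i j)
  choose f hf using hcoord
  refine ⟨fun i => (⟨fun j => f i ((r i)⁻¹ j), r i⟩ : Wreath (Equiv.Perm (X i)) (k i)),
     Equiv.ext fun v => funext fun ⟨i, j⟩ => ?_⟩
  change f i ((r i)⁻¹ j) (v ⟨i, (r i)⁻¹ j⟩) = p v ⟨i, j⟩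
  rw [← hf, Equiv.Perm.inv_def, Equiv.apply_symm_apply]

noncomputable def wreathMulEquivGraphAut [Finite ι] [∀ i, Nonempty (X i)]
    (hcard : Function.Injective fun i => Nat.card (X i))
    (hX : ∀ i, Nontrivial (X i) ∨ k i ≤ 1) :
    (∀ i, Wreath (Equiv.Perm (X i)) (k i)) ≃*
      graphAut (hammingGraph fun c : Σ i, Fin (k i) => X c.1) :=
  MulEquiv.ofBijective ((wreathPerm k X).codRestrict _ (wreathPerm_mem_graphAut k X))
    ⟨fun _ _ h => wreathPerm_injective k X hX (congrArg Subtype.val h),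
      fun q => (exists_wreathPerm_eq k X hcard q.1 q.2).imp fun _ hg => Subtype.ext hg⟩

end WreathAction

theorem Nat.card_wreath (G : Type*) [Group G] (k : ℕ) :
    Nat.card (Wreath G k) = Nat.card G ^ k * k.factorial := by
  unfold Wreath
  rw [Nat.card_congr SemidirectProduct.equivProd, Nat.card_prod, Nat.card_fun, Nat.card_perm]
  simp

section Partition

variable {α : Type*} {W : Finset (Finset α)}

noncomputable def blockRestrict (hpart : ∀ a : α, ∃! w, w ∈ W ∧ a ∈ w) (β : Type*) :
    (α → β) ≃ ∀ w : W, (w.1 → β) :=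
  Equiv.ofBijective (fun u w a => u a) ⟨fun u v huv => funext fun a => by
    obtain ⟨w, ⟨hw, ha⟩, -⟩ := hpart a
    exact congrFun (congrFun huv ⟨w, hw⟩) ⟨a, ha⟩, fun f => by
    choose block hblock hunique using hpart
    refine ⟨fun a => f ⟨block a, (hblock a).1⟩ ⟨a, (hblock a).2⟩, funext fun ⟨w, hw⟩ => ?_⟩
    refine funext fun ⟨a, ha⟩ => ?_
    obtain rfl := hunique a w ⟨hw, ha⟩
    rfl⟩

@[simp]
theorem blockRestrict_apply (hpart : ∀ a : α, ∃! w, w ∈ W ∧ a ∈ w) {β : Type*} (u : α → β)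
    (w : W) (a : w.1) : blockRestrict hpart β u w a = u a :=
  rfl

theorem differsOnlyAt_blockRestrict_iff (hpart : ∀ a : α, ∃! w, w ∈ W ∧ a ∈ w) {β : Type*}
    {u v : α → β} {w : W} :
    DiffersOnlyAt w (blockRestrict hpart β u) (blockRestrict hpart β v) ↔
      (∃ a ∈ w.1, u a ≠ v a) ∧ ∀ a ∉ w.1, u a = v a := by
  refine and_congr (by simp [Function.ne_iff]) ⟨fun h a ha => ?_, fun h w' hw' => ?_⟩
  · obtain ⟨w', ⟨hw', haw'⟩, -⟩ := hpart a
    exact congrFun (h ⟨w', hw'⟩ fun hww => ha (by simpa [← hww] using haw')) ⟨a, haw'⟩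
  · refine funext fun ⟨a, ha⟩ => h a fun haw => hw' (Subtype.ext ?_)
    exact (hpart a).unique ⟨w'.2, ha⟩ ⟨w.2, haw⟩

end Partition

noncomputable def KM.isoHammingGraph {n : ℕ} {W : Finset (Finset (Fin n))}
    (hpart : ∀ a : Fin n, ∃! w, w ∈ W ∧ a ∈ w) :
    KM W ≃g hammingGraph fun w : W => (w.1 → Bool) where
  toEquiv := blockRestrict hpart Bool
  map_rel_iff' {u v} := by
    simp only [hammingGraph_adj, differsOnlyAt_blockRestrict_iff, Subtype.exists, exists_prop]
    rfl

section Spectrum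

open Finset

variable {ι α : Type*} {k m : ι → ℕ} {Wsub : ι → Finset (Finset α)}

noncomputable def spectrumBlock (hk : ∀ i, #(Wsub i) = k i) (c : Σ i, Fin (k i)) : Finset α :=
  (Wsub c.1).equivFin.symm (Fin.cast (hk c.1).symm c.2)

theorem spectrumBlock_mem (hk : ∀ i, #(Wsub i) = k i) (c : Σ i, Fin (k i)) :
    spectrumBlock hk c ∈ Wsub c.1 :=
  ((Wsub c.1).equivFin.symm _).2

variable [Fintype ι] [DecidableEq α] {W : Finset (Finset α)}

noncomputable def spectrumEquiv (hm : Function.Injective m) (hk : ∀ i, #(Wsub i) = k i)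
    (hcard : ∀ i, ∀ w ∈ Wsub i, #w = m i) (hW : W = univ.biUnion Wsub) :
    (Σ i, Fin (k i)) ≃ W :=
  Equiv.ofBijective
    (fun c => ⟨spectrumBlock hk c,
      hW ▸ mem_biUnion.mpr ⟨c.1, mem_univ _, spectrumBlock_mem hk c⟩⟩)
    ⟨fun ⟨i, j⟩ ⟨i', j'⟩ h => by
      have hblock : spectrumBlock hk ⟨i, j⟩ = spectrumBlock hk ⟨i', j'⟩ :=
        congrArg Subtype.val h
      obtain rfl : i = i' := hm <| (hcard i _ (spectrumBlock_mem hk ⟨i, j⟩)).symm.trans <|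
        hblock ▸ hcard i' _ (spectrumBlock_mem hk ⟨i', j'⟩)
      have := (Wsub i).equivFin.symm.injective (Subtype.ext hblock)
      simp_all,
    fun ⟨w, hw⟩ => by
      obtain ⟨i, -, hwi⟩ := mem_biUnion.mp (hW ▸ hw)
      exact ⟨⟨i, Fin.cast (hk i) ((Wsub i).equivFin ⟨w, hwi⟩)⟩,
        Subtype.ext (by simp [spectrumBlock])⟩⟩

theorem card_spectrumEquiv (hm : Function.Injective m) (hk : ∀ i, #(Wsub i) = k i)
    (hcard : ∀ i, ∀ w ∈ Wsub i, #w = m i) (hW : W = univ.biUnion Wsub) (c : Σ i, Fin (k i)) :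
    #(spectrumEquiv hm hk hcard hW c).1 = m c.1 :=
  hcard _ _ (spectrumBlock_mem hk c)

end Spectrum

noncomputable def KM.isoHammingGraphOfSpectrum {n l : ℕ} {k m : Fin l → ℕ}
    {Wsub : Fin l → Finset (Finset (Fin n))} {W : Finset (Finset (Fin n))}
    (hm : Function.Injective m) (hW : W = Finset.univ.biUnion Wsub)
    (hk : ∀ i, (Wsub i).card = k i) (hcard : ∀ i, ∀ w ∈ Wsub i, w.card = m i)
    (hpart : ∀ a : Fin n, ∃! w, w ∈ W ∧ a ∈ w) :
    KM W ≃g hammingGraph fun c : Σ i, Fin (k i) => Fin (m c.1) → Bool :=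
  (KM.isoHammingGraph hpart).trans <| RelIso.symm <|
    hammingGraph.isoOfEquiv (spectrumEquiv hm hk hcard hW) fun c =>
      (Fintype.equivFinOfCardEq (by simp [card_spectrumEquiv])).symm.arrowCongr (Equiv.refl Bool)

theorem Finset.card_le_one_of_forall_card_eq_zero {α : Type*} {S : Finset (Finset α)}
    (h : ∀ w ∈ S, w.card = 0) : S.card ≤ 1 :=
  Finset.card_le_one.mpr fun w hw w' hw' => by
    rw [Finset.card_eq_zero.mp (h w hw), Finset.card_eq_zero.mp (h w' hw')]

theorem mode_preserving_group_iso_prod_wreath {n l : ℕ}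
    (k m : Fin l → ℕ) (hm : Function.Injective m)
    (Wsub : Fin l → Finset (Finset (Fin n)))
    (W : Finset (Finset (Fin n)))
    (hW : W = Finset.univ.biUnion Wsub)
    (hk : ∀ i, (Wsub i).card = k i)
    (hcard : ∀ i, ∀ w ∈ Wsub i, w.card = m i)
    (hpart : ∀ a : Fin n, ∃! w, w ∈ W ∧ a ∈ w) :
    Nonempty (graphAut (KM W) ≃*
      (∀ i : Fin l, Wreath (Equiv.Perm (Fin (m i) → Bool)) (k i))) ∧
    Nat.card (graphAut (KM W)) =
      ∏ i : Fin l, ((2 ^ (m i)).factorial) ^ (k i) * (k i).factorial := by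
  have hX : ∀ i, Nontrivial (Fin (m i) → Bool) ∨ k i ≤ 1 := fun i => by
    rcases Nat.eq_zero_or_pos (m i) with hi | hi
    · exact .inr <| hk i ▸ Finset.card_le_one_of_forall_card_eq_zero fun w hw => hi ▸ hcard i w hw
    · have := Fin.pos_iff_nonempty.mp hi
      exact .inl inferInstance
  have hcardX : Function.Injective fun i => Nat.card (Fin (m i) → Bool) := fun i i' h =>
    hm (Nat.pow_right_injective le_rfl (by simpa using h))
  let iso := (graphAutCongr (KM.isoHammingGraphOfSpectrum hm hW hk hcard hpart)).trans
    (wreathMulEquivGraphAut k (fun i => Fin (m i) → Bool) hcardX hX).symm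
  refine ⟨⟨iso⟩, ?_⟩
  rw [Nat.card_congr iso.toEquiv, Nat.card_pi]
  simp [Nat.card_wreath, Fintype.card_perm]
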